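/- arXiv:1606.05291 — 3 statements merged into one kernel-verified Lean document; each statement's English description precedes it below -/
import Mathlib

section
/- Let α ∈ ℝ \ {0}, ε > 0, and let b_α(φ) = ∫₀^ε |φ'(y)|² dy + α(|φ(ε)|² − |φ(0)|²) for φ ∈ H^1(0,ε). Then b_α(φ) ≥ −α² ‖φ‖²_{L²(0,ε)} for all φ ∈ H^1(0,ε). -/
open MeasureTheory intervalIntegral
open scoped InnerProductSpace

/-!
Since `‖φ‖²` has derivative `2⟪φ, φ'⟫`, the boundary term equals `α ∫ 2⟪φ, φ'⟫`,
and pointwise `α² ‖φ‖² + 2α⟪φ, φ'⟫ + ‖φ'‖² = ‖α φ + φ'‖² ≥ 0`; integrating gives the bound.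
-/

section

variable {F : Type*} [NormedAddCommGroup F] [InnerProductSpace ℝ F]

theorem neg_sq_mul_norm_sq_sub_norm_sq_le_two_mul_inner (α : ℝ) (u v : F) :
    -α ^ 2 * ‖u‖ ^ 2 - ‖v‖ ^ 2 ≤ α * (2 * ⟪u, v⟫_ℝ) := by
  have h := norm_add_sq_real (α • u) v
  rw [norm_smul, real_inner_smul_left, mul_pow, Real.norm_eq_abs, sq_abs] at h
  nlinarith [sq_nonneg ‖α • u + v‖]

variable {φ φ' : ℝ → F} {a b : ℝ}

theorem integral_two_inner_deriv_eq_norm_sq_sub (hab : a ≤ b)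
    (hderiv : ∀ x ∈ Set.Icc a b, HasDerivAt φ (φ' x) x)
    (hcont : ContinuousOn φ' (Set.Icc a b)) :
    ∫ y in a..b, 2 * ⟪φ y, φ' y⟫_ℝ = ‖φ b‖ ^ 2 - ‖φ a‖ ^ 2 := by
  have hφ : ContinuousOn φ (Set.Icc a b) := HasDerivAt.continuousOn hderiv
  refine integral_eq_sub_of_hasDerivAt (fun x hx => (hderiv x ?_).norm_sq) ?_
  · rwa [Set.uIcc_of_le hab] at hx
  · exact (continuousOn_const.mul (hφ.inner hcont)).intervalIntegrable_of_Icc (μ := volume) hab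

theorem integral_norm_sq_deriv_add_boundary_ge (α : ℝ) (hab : a ≤ b)
    (hderiv : ∀ x ∈ Set.Icc a b, HasDerivAt φ (φ' x) x)
    (hcont : ContinuousOn φ' (Set.Icc a b)) :
    (∫ y in a..b, ‖φ' y‖ ^ 2) + α * (‖φ b‖ ^ 2 - ‖φ a‖ ^ 2) ≥
      -α ^ 2 * ∫ y in a..b, ‖φ y‖ ^ 2 := by
  have hφ : ContinuousOn φ (Set.Icc a b) := HasDerivAt.continuousOn hderiv
  have hφ_sq : IntervalIntegrable (fun y => ‖φ y‖ ^ 2) volume a b :=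
    (hφ.norm.pow 2).intervalIntegrable_of_Icc hab
  have hφ'_sq : IntervalIntegrable (fun y => ‖φ' y‖ ^ 2) volume a b :=
    (hcont.norm.pow 2).intervalIntegrable_of_Icc hab
  have hinner : IntervalIntegrable (fun y => 2 * ⟪φ y, φ' y⟫_ℝ) volume a b :=
    (continuousOn_const.mul (hφ.inner hcont)).intervalIntegrable_of_Icc hab
  have hpointwise := integral_mono_on hab ((hφ_sq.const_mul (-α ^ 2)).sub hφ'_sq)
    (hinner.const_mul α) fun y _ =>
      neg_sq_mul_norm_sq_sub_norm_sq_le_two_mul_inner α (φ y) (φ' y)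
  rw [integral_sub (hφ_sq.const_mul _) hφ'_sq, intervalIntegral.integral_const_mul,
    intervalIntegral.integral_const_mul,
    integral_two_inner_deriv_eq_norm_sq_sub hab hderiv hcont] at hpointwise
  linarith

end

theorem robin_form_lower_bound_general (ε α : ℝ) (hε : 0 < ε)
    (φ φ' : ℝ → ℂ)
    (hderiv : ∀ x ∈ Set.Icc (0:ℝ) ε, HasDerivAt φ (φ' x) x)
    (hcont : ContinuousOn φ' (Set.Icc (0:ℝ) ε)) :
    (∫ y in (0:ℝ)..ε, ‖φ' y‖ ^ 2) + α * (‖φ ε‖ ^ 2 - ‖φ 0‖ ^ 2) ≥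
      -α ^ 2 * ∫ y in (0:ℝ)..ε, ‖φ y‖ ^ 2 :=
  integral_norm_sq_deriv_add_boundary_ge α hε.le hderiv hcont

/-- Lower bound for the transversal Robin form: for α ≠ 0 and φ ∈ H¹(0,ε),
b_α(φ) = ∫₀^ε |φ'|² + α(|φ(ε)|² − |φ(0)|²) ≥ −α² ‖φ‖²_{L²(0,ε)}. -/
theorem robin_form_lower_bound (ε α : ℝ) (hε : 0 < ε) (hα : α ≠ 0)
    (φ φ' : ℝ → ℂ)
    (hderiv : ∀ x ∈ Set.Icc (0:ℝ) ε, HasDerivAt φ (φ' x) x)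
    (hcont : ContinuousOn φ' (Set.Icc (0:ℝ) ε)) :
    (∫ y in (0:ℝ)..ε, ‖φ' y‖ ^ 2) + α * (‖φ ε‖ ^ 2 - ‖φ 0‖ ^ 2) ≥
      -α ^ 2 * ∫ y in (0:ℝ)..ε, ‖φ y‖ ^ 2 :=
  robin_form_lower_bound_general ε α hε φ φ' hderiv hcont
end

section
/- Let α ≠ 0, ε > 0, and μ > 0, μ ≠ α². Then any function ψ(y) = A e^{√μ y} + B e^{−√μ y} satisfying −ψ'(0) − αψ(0) = 0 and ψ'(ε) + αψ(ε) = 0 must be identically zero. Consequently, −α² is the unique negative eigenvalue of the Robin Laplacian −Δ_α^I. -/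
/-!
Writing `s = √μ`, the two Robin conditions on `ψ = A e^{sy} + B e^{-sy}` read
`(s + α) A = (s - α) B` and `(s + α) A e^{sε} = (s - α) B e^{-sε}`. Subtracting gives
`(s + α) A (e^{sε} - e^{-sε}) = 0`; since `sε > 0` and `(s + α)(s - α) = μ - α² ≠ 0`,
both coefficients vanish.
-/

open Complex

theorem hasDerivAt_cexp_add_cexp_neg (A B c : ℂ) (y : ℝ) :
    HasDerivAt (fun y : ℝ => A * cexp (c * y) + B * cexp (-c * y))
      (c * (A * cexp (c * y) - B * cexp (-c * y))) y := by
  have hlin : ∀ d : ℂ, HasDerivAt (fun y : ℝ => d * y) d y := fun d => by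
    simpa using ((hasDerivAt_id y).ofReal_comp).const_mul d
  exact (((hlin c).cexp.const_mul A).add ((hlin (-c)).cexp.const_mul B)).congr_deriv (by ring)

theorem Complex.exp_ofReal_ne_exp_neg {t : ℝ} (ht : t ≠ 0) : cexp t ≠ cexp (-t) := by
  rw [← ofReal_neg, ← ofReal_exp, ← ofReal_exp, Ne, ofReal_inj, Real.exp_eq_exp]
  contrapose! ht
  linarith

theorem eq_zero_of_robin_linear_system {K : Type*} [Field K] {c α A B E E' : K}
    (hc : c ^ 2 ≠ α ^ 2) (hE : E ≠ E')
    (h₀ : (c + α) * A = (c - α) * B) (hε : (c + α) * A * E = (c - α) * B * E') :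
    A = 0 ∧ B = 0 := by
  have hsum : c + α ≠ 0 := fun h => hc (by linear_combination (c - α) * h)
  have hdiff : c - α ≠ 0 := fun h => hc (by linear_combination (c + α) * h)
  have hprod : (c + α) * A * (E - E') = 0 := by linear_combination hε - E' * h₀
  have hA : A = 0 := by simpa [hsum, sub_eq_zero, hE] using hprod
  refine ⟨hA, ?_⟩
  simpa [hA, hdiff] using h₀.symm

theorem robin_unique_negative_eigenvalue_general (ε α μ : ℝ) (hε : 0 < ε)
    (hμ : 0 < μ) (hμα : μ ≠ α ^ 2) (A B : ℂ)
    (ψ : ℝ → ℂ)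
    (hψ : ψ = fun y : ℝ => A * Complex.exp (Real.sqrt μ * y) +
      B * Complex.exp (-(Real.sqrt μ) * y))
    (h0 : -(deriv ψ 0) - (α : ℂ) * ψ 0 = 0)
    (hbd : deriv ψ ε + (α : ℂ) * ψ ε = 0) :
    ∀ y : ℝ, ψ y = 0 := by
  set s := Real.sqrt μ
  have hderiv : ∀ y : ℝ, deriv ψ y = s * (A * cexp (s * y) - B * cexp (-s * y)) :=
    fun y => hψ ▸ (hasDerivAt_cexp_add_cexp_neg A B s y).deriv
  have hc : (s : ℂ) ^ 2 ≠ (α : ℂ) ^ 2 := by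
    exact_mod_cast (Real.sq_sqrt hμ.le).trans_ne hμα
  have hE : cexp (s * ε) ≠ cexp (-s * ε) := by
    have := exp_ofReal_ne_exp_neg (mul_pos (Real.sqrt_pos.mpr hμ) hε).ne'
    push_cast at this
    rwa [neg_mul]
  obtain ⟨rfl, rfl⟩ := eq_zero_of_robin_linear_system (A := A) (B := B) hc hE
    (by
      rw [hderiv, hψ] at h0
      simp only [ofReal_zero, mul_zero, exp_zero] at h0
      linear_combination -h0)
    (by
      rw [hderiv, hψ] at hbd
      beta_reduce at hbd
      linear_combination hbd)
  simp [hψ]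

/-- If μ > 0, μ ≠ α², then any ψ(y) = A e^{√μ y} + B e^{−√μ y} satisfying the Robin
boundary conditions −ψ'(0) − αψ(0) = 0, ψ'(ε) + αψ(ε) = 0 (α ≠ 0, ε > 0) vanishes
identically; consequently −α² is the unique negative eigenvalue. -/
theorem robin_unique_negative_eigenvalue (ε α μ : ℝ) (hε : 0 < ε) (hα : α ≠ 0)
    (hμ : 0 < μ) (hμα : μ ≠ α ^ 2) (A B : ℂ)
    (ψ : ℝ → ℂ)
    (hψ : ψ = fun y : ℝ => A * Complex.exp (Real.sqrt μ * y) +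
      B * Complex.exp (-(Real.sqrt μ) * y))
    (h0 : -(deriv ψ 0) - (α : ℂ) * ψ 0 = 0)
    (hbd : deriv ψ ε + (α : ℂ) * ψ ε = 0) :
    ∀ y : ℝ, ψ y = 0 :=
  robin_unique_negative_eigenvalue_general ε α μ hε hμ hμα A B ψ hψ h0 hbd
end

section
/- Let {e_n}_{n≥0} be an orthonormal basis of a Hilbert space H and {ψ_n}_{n≥0} a sequence in H with Σ_{n≥0} ‖ψ_n − e_n‖² < 1. Then the family {ψ_n} is complete: if x ∈ H satisfies ⟨ψ_n, x⟩ = 0 for all n, then x = 0. -/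
open scoped InnerProductSpace

/-! If `x ⊥ ψ n` for all `n`, then `⟪e n, x⟫ = -⟪ψ n - e n, x⟫`, so by Parseval and Cauchy–Schwarz
`‖x‖² = ∑ ‖⟪e n, x⟫‖² ≤ (∑ ‖ψ n - e n‖²) ‖x‖²`, which forces `x = 0` when the sum is `< 1`. -/

section

variable {ι 𝕜 E : Type*} [RCLike 𝕜] [NormedAddCommGroup E] [InnerProductSpace 𝕜 E]

theorem norm_inner_le_norm_sub_mul_norm_of_inner_eq_zero {u v x : E} (h : ⟪v, x⟫_𝕜 = 0) :
    ‖⟪u, x⟫_𝕜‖ ≤ ‖v - u‖ * ‖x‖ := by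
  have hu : ⟪u, x⟫_𝕜 = -⟪v - u, x⟫_𝕜 := by rw [inner_sub_left, h, zero_sub, neg_neg]
  rw [hu, norm_neg]
  exact norm_inner_le_norm _ _

namespace HilbertBasis

theorem hasSum_norm_inner_sq (b : HilbertBasis ι 𝕜 E) (x : E) :
    HasSum (fun i => ‖⟪b i, x⟫_𝕜‖ ^ 2) (‖x‖ ^ 2) := by
  have h := lp.hasSum_norm (p := 2) (by norm_num) (b.repr x)
  simpa only [ENNReal.toReal_ofNat, Real.rpow_two, b.repr_apply_apply,
    LinearIsometryEquiv.norm_map] using h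

theorem norm_sq_le_tsum_mul_norm_sq_of_inner_eq_zero (b : HilbertBasis ι 𝕜 E) {ψ : ι → E}
    (hsum : Summable fun i => ‖ψ i - b i‖ ^ 2) {x : E} (hx : ∀ i, ⟪ψ i, x⟫_𝕜 = 0) :
    ‖x‖ ^ 2 ≤ (∑' i, ‖ψ i - b i‖ ^ 2) * ‖x‖ ^ 2 := by
  have hparseval := b.hasSum_norm_inner_sq x
  have hterm (i : ι) : ‖⟪b i, x⟫_𝕜‖ ^ 2 ≤ ‖ψ i - b i‖ ^ 2 * ‖x‖ ^ 2 := by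
    rw [← mul_pow]
    gcongr
    exact norm_inner_le_norm_sub_mul_norm_of_inner_eq_zero (hx i)
  calc ‖x‖ ^ 2 = ∑' i, ‖⟪b i, x⟫_𝕜‖ ^ 2 := hparseval.tsum_eq.symm
    _ ≤ ∑' i, ‖ψ i - b i‖ ^ 2 * ‖x‖ ^ 2 :=
      hparseval.summable.tsum_le_tsum hterm (hsum.mul_right _)
    _ = (∑' i, ‖ψ i - b i‖ ^ 2) * ‖x‖ ^ 2 := tsum_mul_right

end HilbertBasis

end

theorem complete_of_small_perturbation_general
    {H : Type*} [NormedAddCommGroup H] [InnerProductSpace ℂ H]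
    (e : HilbertBasis ℕ ℂ H) (ψ : ℕ → H)
    (hsum : Summable (fun n => ‖ψ n - e n‖ ^ 2))
    (hlt : (∑' n, ‖ψ n - e n‖ ^ 2) < 1) :
    ∀ x : H, (∀ n, ⟪ψ n, x⟫_ℂ = 0) → x = 0 := by
  intro x hx
  have hle := e.norm_sq_le_tsum_mul_norm_sq_of_inner_eq_zero hsum hx
  by_contra hne
  have hpos : 0 < ‖x‖ ^ 2 := by positivity
  nlinarith

/-- Stability of completeness (Paley–Wiener/Kato): if {e_n} is an orthonormal basis of a
Hilbert space H and {ψ_n} satisfies Σ‖ψ_n − e_n‖² < 1, then {ψ_n} is complete: any x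
orthogonal to every ψ_n is zero. -/
theorem complete_of_small_perturbation
    {H : Type*} [NormedAddCommGroup H] [InnerProductSpace ℂ H] [CompleteSpace H]
    (e : HilbertBasis ℕ ℂ H) (ψ : ℕ → H)
    (hsum : Summable (fun n => ‖ψ n - e n‖ ^ 2))
    (hlt : (∑' n, ‖ψ n - e n‖ ^ 2) < 1) :
    ∀ x : H, (∀ n, ⟪ψ n, x⟫_ℂ = 0) → x = 0 :=
  complete_of_small_perturbation_general e ψ hsum hlt
end
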